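/- arXiv:2201.08113 — 2 statements merged into one kernel-verified Lean document; each statement's English description precedes it below -/
import Mathlib

section
/- Assume Σ_ℓ(0) is integral, and fix α ∈ Σ_ℓ and u ∈ X^∨. Let K ⊆ ℝ × X_ℝ be the convex cone generated by (1, 0) together with all elements (E_ℓ(v) + v(γ) − E_ℓ(u) − u(α), γ − α + 2ℓφ(v − u)) with γ ∈ Σ_ℓ and v ∈ X^∨. Then: (1) (x₀, x) ∈ K if and only if there exists β ∈ Σ_ℓ^α with x ∈ Cone(C_ℓ^β) and x₀ ≥ v_β(x) + u(x); (2) every (x₀, x) ∈ K satisfies x₀ ≥ u(x), with equality if and only if x ∈ Cone(C_ℓ^α) and x₀ = u(x). -/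
/-!
For every functional `w`, a generator `(a, b)` of `K` indexed by `(γ, v)` has
`a - w(b) = (E_ℓ(v - w) + (v - w)(γ)) - (E_ℓ(u - w) + (u - w)(α))`. If `α` and
`β = α - 2ℓφ(v_β)` both lie in `Σ_ℓ`, then `E_ℓ(v_β) = v_β(α)`, so for `w = u + v_β` every
generator, hence every point of `K`, satisfies `w(x) ≤ x₀`; and the lifts `(w(γ - β), γ - β)`,
`γ ∈ Σ_ℓ`, are generators, so `Cone(C_ℓ^β)` lifts into `K`. Taking `v_β = 0` gives (2): the points
of `K` with `x₀ = u(x)` form the face spanned by the generators on which equality holds.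

For (1) it remains to put every `x` into some `Cone(C_ℓ^β)` with `β ∈ Σ_ℓ^α`. The translates of
`Σ_ℓ(0)` by the lattice `2ℓφ(X^∨)` cover `X_ℝ`, and only finitely many meet a bounded set, so one
of them contains both `α` and `α + t x` for some `t > 0`. It is centred at `α - β` with
`β ∈ Σ_ℓ`, and by integrality it is the convex hull of points `γ + α - β` with `γ ∈ Σ_ℓ`, so
`t x ∈ Cone(C_ℓ^β)`.
-/

open scoped BigOperators Pointwise

namespace NFC

/-- The coordinatewise embedding of the lattice `X = ℤ^g` into `X_ℝ = ℝ^g`. -/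
def iota {g : ℕ} (x : Fin g → ℤ) : Fin g → ℝ := fun i => (x i : ℝ)

/-- The ℝ-linear extension of an integral linear functional `u ∈ X^∨` to `X_ℝ`. -/
noncomputable def extd {g : ℕ} (u : (Fin g → ℤ) →ₗ[ℤ] ℤ) (x : Fin g → ℝ) : ℝ :=
  ∑ i, (u (Pi.single i 1) : ℝ) * x i

/-- `E_ℓ(u) = ℓ · u(φ(u))`. -/
def El {g : ℕ} {Y : Submodule ℤ (Fin g → ℤ)}
    (φ : ((Fin g → ℤ) →ₗ[ℤ] ℤ) → Y) (ℓ : ℕ) (u : (Fin g → ℤ) →ₗ[ℤ] ℤ) : ℤ :=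
  (ℓ : ℤ) * u (φ u : Fin g → ℤ)

/-- `Σ_ℓ = {α ∈ X : E_ℓ(u) + u(α) ≥ 0 for all u ∈ X^∨}`. -/
def SigmaL {g : ℕ} {Y : Submodule ℤ (Fin g → ℤ)}
    (φ : ((Fin g → ℤ) →ₗ[ℤ] ℤ) → Y) (ℓ : ℕ) : Set (Fin g → ℤ) :=
  {α | ∀ u : (Fin g → ℤ) →ₗ[ℤ] ℤ, 0 ≤ El φ ℓ u + u α}

/-- The Voronoi polytope `Σ_ℓ(c)`, defined w.r.t. the norm `‖z‖ = √(B̄(z,z))`. -/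
noncomputable def VorP {g : ℕ} {Y : Submodule ℤ (Fin g → ℤ)}
    (Bb : (Fin g → ℝ) →ₗ[ℝ] (Fin g → ℝ) →ₗ[ℝ] ℝ)
    (φ : ((Fin g → ℤ) →ₗ[ℤ] ℤ) → Y) (ℓ : ℕ)
    (c : (Fin g → ℤ) →ₗ[ℤ] ℤ) : Set (Fin g → ℝ) :=
  {x | ∀ u : (Fin g → ℤ) →ₗ[ℤ] ℤ,
    Real.sqrt (Bb (x - iota ((2 * (ℓ : ℤ)) • ((φ c : Fin g → ℤ))))
               (x - iota ((2 * (ℓ : ℤ)) • ((φ c : Fin g → ℤ))))) ≤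
    Real.sqrt (Bb (x - iota ((2 * (ℓ : ℤ)) • ((φ u : Fin g → ℤ))))
               (x - iota ((2 * (ℓ : ℤ)) • ((φ u : Fin g → ℤ)))))}

/-- A subset `Δ ⊆ X_ℝ` is integral: a bounded convex polytope equal to the convex hull
of `Δ ∩ X`, symmetric about `0`, containing `0`, with `Δ ∩ X` containing a ℤ-basis. -/
def IsIntegral {g : ℕ} (Δ : Set (Fin g → ℝ)) : Prop :=
  Bornology.IsBounded Δ ∧
  Δ = convexHull ℝ (Δ ∩ Set.range (iota (g := g))) ∧
  Δ = -Δ ∧ (0 : Fin g → ℝ) ∈ Δ ∧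
  ∃ b : Module.Basis (Fin g) ℤ (Fin g → ℤ), ∀ i, iota (b i) ∈ Δ

/-- `Σ_ℓ^α = (α + 2ℓφ(X^∨)) ∩ Σ_ℓ`. -/
def SigmaAlpha {g : ℕ} {Y : Submodule ℤ (Fin g → ℤ)}
    (φ : ((Fin g → ℤ) →ₗ[ℤ] ℤ) → Y) (ℓ : ℕ) (α : Fin g → ℤ) : Set (Fin g → ℤ) :=
  {β | β ∈ SigmaL φ ℓ ∧ ∃ u : (Fin g → ℤ) →ₗ[ℤ] ℤ, β = α + (2 * (ℓ : ℤ)) • ((φ u : Fin g → ℤ))}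

/-- The convex cone generated by a set `S` (the set of all nonnegative combinations). -/
def conicHull {M : Type*} [AddCommMonoid M] [Module ℝ M] (S : Set M) : Set M :=
  {y | ∃ (n : ℕ) (c : Fin n → ℝ) (v : Fin n → M),
    (∀ i, 0 ≤ c i) ∧ (∀ i, v i ∈ S) ∧ y = ∑ i, c i • v i}

/-- `Cone(C_ℓ^β)`: the convex cone in `X_ℝ` generated by `{γ − β : γ ∈ Σ_ℓ}`. -/
def coneC {g : ℕ} {Y : Submodule ℤ (Fin g → ℤ)}
    (φ : ((Fin g → ℤ) →ₗ[ℤ] ℤ) → Y) (ℓ : ℕ) (β : Fin g → ℤ) : Set (Fin g → ℝ) :=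
  conicHull {w | ∃ γ ∈ SigmaL φ ℓ, w = iota (γ - β)}

section Phi

variable {M : Type*} [AddCommGroup M] {Y : Submodule ℤ M} {B : Y →ₗ[ℤ] M →ₗ[ℤ] ℤ} {N : ℕ}
  {φ : Module.Dual ℤ M → Y}

theorem injective_of_apply_self_pos (hBpos : ∀ y : Y, y ≠ 0 → 0 < B y (y : M)) :
    Function.Injective B := by
  intro y z h
  by_contra hne
  have := hBpos (y - z) (sub_ne_zero.mpr hne)
  rw [map_sub, h, sub_self, LinearMap.zero_apply] at this
  exact this.false

theorem phi_add (hBpos : ∀ y : Y, y ≠ 0 → 0 < B y (y : M))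
    (hφ : ∀ u : Module.Dual ℤ M, B (φ u) = (N : ℤ) • u) (u v : Module.Dual ℤ M) :
    φ (u + v) = φ u + φ v :=
  injective_of_apply_self_pos hBpos <| by rw [map_add, hφ, hφ, hφ, smul_add]

theorem phi_injective (hNpos : 0 < N) (hφ : ∀ u : Module.Dual ℤ M, B (φ u) = (N : ℤ) • u) :
    Function.Injective φ := fun u v h =>
  smul_right_injective _ (Int.natCast_ne_zero.mpr hNpos.ne') <| by
    show (N : ℤ) • u = (N : ℤ) • v
    rw [← hφ, ← hφ, h]

theorem apply_phi_comm (hBsymm : ∀ y z : Y, B y (z : M) = B z (y : M)) (hNpos : 0 < N)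
    (hφ : ∀ u : Module.Dual ℤ M, B (φ u) = (N : ℤ) • u) (u v : Module.Dual ℤ M) :
    u (φ v : M) = v (φ u : M) := by
  have h := hBsymm (φ u) (φ v)
  rw [hφ, hφ, LinearMap.smul_apply, LinearMap.smul_apply, smul_eq_mul, smul_eq_mul] at h
  exact mul_left_cancel₀ (Int.natCast_ne_zero.mpr hNpos.ne') h

end Phi

section El

variable {g : ℕ} {Y : Submodule ℤ (Fin g → ℤ)} {φ : Module.Dual ℤ (Fin g → ℤ) → Y} {ℓ : ℕ}
  (hadd : ∀ u v, φ (u + v) = φ u + φ v)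
  (hsymm : ∀ u v : Module.Dual ℤ (Fin g → ℤ), u (φ v : Fin g → ℤ) = v (φ u : Fin g → ℤ))

@[simp]
theorem El_zero : El φ ℓ 0 = 0 := by
  simp [El]

include hadd

theorem phi_zero : φ 0 = 0 := (AddMonoidHom.mk' φ hadd).map_zero

theorem phi_neg (u : Module.Dual ℤ (Fin g → ℤ)) : φ (-u) = -φ u :=
  (AddMonoidHom.mk' φ hadd).map_neg u

theorem El_neg (u : Module.Dual ℤ (Fin g → ℤ)) : El φ ℓ (-u) = El φ ℓ u := by
  simp only [El, phi_neg hadd, NegMemClass.coe_neg, map_neg, LinearMap.neg_apply, neg_neg]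

include hsymm

theorem El_add (u v : Module.Dual ℤ (Fin g → ℤ)) :
    El φ ℓ (u + v) = El φ ℓ u + El φ ℓ v + 2 * ℓ * u (φ v : Fin g → ℤ) := by
  simp only [El, hadd, Submodule.coe_add, map_add, LinearMap.add_apply, hsymm v u]
  ring

theorem El_add_apply_add_smul_phi (t s : Module.Dual ℤ (Fin g → ℤ)) (γ : Fin g → ℤ) :
    El φ ℓ t + t (γ + (2 * ℓ : ℤ) • (φ s : Fin g → ℤ)) =
      (El φ ℓ (t + s) + (t + s) γ) - (El φ ℓ s + s γ) := by
  rw [El_add hadd hsymm, map_add, map_zsmul, LinearMap.add_apply, smul_eq_mul]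
  ring

theorem add_smul_phi_mem_SigmaL {γ : Fin g → ℤ} {s : Module.Dual ℤ (Fin g → ℤ)}
    (hγ : γ ∈ SigmaL φ ℓ) (hs : El φ ℓ s + s γ = 0) :
    γ + (2 * ℓ : ℤ) • (φ s : Fin g → ℤ) ∈ SigmaL φ ℓ := fun t => by
  rw [El_add_apply_add_smul_phi hadd hsymm, hs, sub_zero]
  exact hγ (t + s)

theorem El_add_apply_eq_zero {α : Fin g → ℤ} {s : Module.Dual ℤ (Fin g → ℤ)}
    (hα : α ∈ SigmaL φ ℓ) (hβ : α + (2 * ℓ : ℤ) • (φ s : Fin g → ℤ) ∈ SigmaL φ ℓ) :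
    El φ ℓ s + s α = 0 := by
  have h := hβ (-s)
  rw [El_add_apply_add_smul_phi hadd hsymm, neg_add_cancel, El_zero, LinearMap.zero_apply,
    zero_add, zero_sub] at h
  exact le_antisymm (neg_nonneg.mp h) (hα s)

/-- `a - w(b)` for the generator `(a, b)` of `K` indexed by `(γ, v)`. -/
theorem El_add_apply_sub_apply (u v w : Module.Dual ℤ (Fin g → ℤ)) (α γ : Fin g → ℤ) :
    (El φ ℓ v + v γ - El φ ℓ u - u α) - w (γ - α + (2 * ℓ : ℤ) • (φ (v - u) : Fin g → ℤ)) =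
      (El φ ℓ (v - w) + (v - w) γ) - (El φ ℓ (u - w) + (u - w) α) := by
  simp only [sub_eq_add_neg, El_add hadd hsymm, El_neg hadd, hadd, phi_neg hadd,
    Submodule.coe_add, NegMemClass.coe_neg, map_add, map_neg, map_zsmul, LinearMap.add_apply,
    LinearMap.neg_apply, smul_eq_mul, hsymm w]
  ring

theorem El_add_apply_sub_apply_of_mem_SigmaL {α : Fin g → ℤ} {vβ : Module.Dual ℤ (Fin g → ℤ)}
    (hα : α ∈ SigmaL φ ℓ) (hβ : α - (2 * ℓ : ℤ) • (φ vβ : Fin g → ℤ) ∈ SigmaL φ ℓ)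
    (u v : Module.Dual ℤ (Fin g → ℤ)) (γ : Fin g → ℤ) :
    (El φ ℓ v + v γ - El φ ℓ u - u α) -
        (u + vβ) (γ - α + (2 * ℓ : ℤ) • (φ (v - u) : Fin g → ℤ)) =
      El φ ℓ (v - (u + vβ)) + (v - (u + vβ)) γ := by
  have h : El φ ℓ (u - (u + vβ)) + (u - (u + vβ)) α = 0 := by
    refine El_add_apply_eq_zero hadd hsymm hα ?_
    rwa [sub_add_cancel_left, phi_neg hadd, NegMemClass.coe_neg, smul_neg, ← sub_eq_add_neg]
  rw [El_add_apply_sub_apply hadd hsymm, h, sub_zero]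

end El

section ConicHull

variable {M M' : Type*} [AddCommGroup M] [Module ℝ M] [AddCommGroup M'] [Module ℝ M']

theorem conicHull_eq_hull (S : Set M) : conicHull S = PointedCone.hull ℝ S := by
  ext y
  rw [SetLike.mem_coe, Submodule.mem_span_set']
  constructor
  · rintro ⟨n, c, v, hc, hv, rfl⟩
    exact ⟨n, fun i => ⟨c i, hc i⟩, fun i => ⟨v i, hv i⟩, rfl⟩
  · rintro ⟨n, c, v, rfl⟩
    exact ⟨n, fun i => c i, fun i => v i, fun i => (c i).2, fun i => (v i).2, rfl⟩

theorem map_mem_conicHull {S : Set M} {T : Set M'} (f : M →ₗ[ℝ] M') (hf : f '' S ⊆ T) {p : M}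
    (hp : p ∈ conicHull S) : f p ∈ conicHull T := by
  rw [conicHull_eq_hull] at hp ⊢
  exact Submodule.span_mono hf
    (Submodule.apply_mem_span_image_of_mem_span (f.restrictScalars {c : ℝ // 0 ≤ c}) hp)

theorem le_of_mem_conicHull {S : Set M} {f f' : M →ₗ[ℝ] ℝ} (hS : ∀ q ∈ S, f q ≤ f' q) {p : M}
    (hp : p ∈ conicHull S) : f p ≤ f' p := by
  rw [conicHull_eq_hull] at hp
  induction hp using Submodule.span_induction with
  | mem q hq => exact hS q hq
  | zero => simp
  | add x y _ _ hx hy => simpa only [map_add] using add_le_add hx hy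
  | smul c x _ hx =>
    simpa only [← Nonneg.coe_smul, map_smul, smul_eq_mul] using mul_le_mul_of_nonneg_left hx c.2

theorem mem_conicHull_of_eq {S : Set M} {f f' : M →ₗ[ℝ] ℝ} (hS : ∀ q ∈ S, f q ≤ f' q) {p : M}
    (hp : p ∈ conicHull S) (heq : f p = f' p) : p ∈ conicHull {q ∈ S | f q = f' q} := by
  rw [conicHull_eq_hull] at hp ⊢
  induction hp using Submodule.span_induction with
  | mem q hq => exact Submodule.subset_span ⟨hq, heq⟩
  | zero => exact zero_mem _
  | add x y hxS hyS hx hy =>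
    have hxle := le_of_mem_conicHull hS (by rw [conicHull_eq_hull]; exact hxS)
    have hyle := le_of_mem_conicHull hS (by rw [conicHull_eq_hull]; exact hyS)
    rw [map_add, map_add] at heq
    exact add_mem (hx (by linarith)) (hy (by linarith))
  | smul c x _ hx =>
    rcases eq_or_ne (c : ℝ) 0 with hc | hc
    · rw [show c = 0 from Subtype.ext hc, zero_smul]
      exact zero_mem _
    · refine Submodule.smul_mem _ c (hx ?_)
      simpa only [← Nonneg.coe_smul, map_smul, smul_eq_mul, mul_eq_mul_left_iff, hc,
        or_false] using heq

end ConicHull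

section Lattice

variable {g : ℕ}

@[simp]
theorem iota_zero : iota (0 : Fin g → ℤ) = 0 :=
  funext fun _ => Int.cast_zero

theorem iota_add (a b : Fin g → ℤ) : iota (a + b) = iota a + iota b := by
  funext i; simp [iota]

theorem iota_sub (a b : Fin g → ℤ) : iota (a - b) = iota a - iota b := by
  funext i; simp [iota]

theorem iota_zsmul (k : ℤ) (a : Fin g → ℤ) : iota (k • a) = (k : ℝ) • iota a := by
  funext i; simp [iota]

theorem iota_single (i : Fin g) : iota (Pi.single i 1) = Pi.single i (1 : ℝ) := by
  funext j; by_cases h : j = i <;> simp [iota, h]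

noncomputable def extdLinear (u : Module.Dual ℤ (Fin g → ℤ)) : Module.Dual ℝ (Fin g → ℝ) :=
  ∑ i, (u (Pi.single i 1) : ℝ) • LinearMap.proj i

@[simp]
theorem extdLinear_apply (u : Module.Dual ℤ (Fin g → ℤ)) (x : Fin g → ℝ) :
    extdLinear u x = extd u x := by
  simp [extdLinear, extd]

theorem extd_add (u v : Module.Dual ℤ (Fin g → ℤ)) (x : Fin g → ℝ) :
    extd (u + v) x = extd u x + extd v x := by
  simp [extd, add_mul, Finset.sum_add_distrib]

theorem extd_iota (u : Module.Dual ℤ (Fin g → ℤ)) (ξ : Fin g → ℤ) :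
    extd u (iota ξ) = u ξ := by
  rw [LinearMap.pi_apply_eq_sum_univ u ξ, extd]
  push_cast
  refine Finset.sum_congr rfl fun i _ => ?_
  have hi : (fun j => if i = j then (1 : ℤ) else 0) = Pi.single i 1 := by
    funext j; simp [Pi.single_apply, eq_comm]
  simp [hi, iota, mul_comm]

end Lattice

section ConeK

variable {g : ℕ} {Y : Submodule ℤ (Fin g → ℤ)} {φ : Module.Dual ℤ (Fin g → ℤ) → Y} {ℓ : ℕ}
  (hadd : ∀ u v, φ (u + v) = φ u + φ v)
  (hsymm : ∀ u v : Module.Dual ℤ (Fin g → ℤ), u (φ v : Fin g → ℤ) = v (φ u : Fin g → ℤ))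
  {α : Fin g → ℤ} {u : Module.Dual ℤ (Fin g → ℤ)}

def kGenerators (φ : Module.Dual ℤ (Fin g → ℤ) → Y) (ℓ : ℕ) (α : Fin g → ℤ)
    (u : Module.Dual ℤ (Fin g → ℤ)) : Set (ℝ × (Fin g → ℝ)) :=
  insert ((1 : ℝ), (0 : Fin g → ℝ))
    {p | ∃ γ ∈ SigmaL φ ℓ, ∃ v : Module.Dual ℤ (Fin g → ℤ),
      p = (((El φ ℓ v + v γ - El φ ℓ u - u α : ℤ) : ℝ),
        iota (γ - α + (2 * (ℓ : ℤ)) • ((φ (v - u) : Fin g → ℤ))))}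

include hadd hsymm

theorem extd_snd_le_fst_of_mem_kGenerators {vβ : Module.Dual ℤ (Fin g → ℤ)}
    (hα : α ∈ SigmaL φ ℓ) (hβ : α - (2 * ℓ : ℤ) • (φ vβ : Fin g → ℤ) ∈ SigmaL φ ℓ)
    {q : ℝ × (Fin g → ℝ)} (hq : q ∈ kGenerators φ ℓ α u) : extd (u + vβ) q.2 ≤ q.1 := by
  rcases hq with rfl | ⟨γ, hγ, v, rfl⟩
  · simp [extd]
  · have := El_add_apply_sub_apply_of_mem_SigmaL hadd hsymm hα hβ u v γ
    rw [extd_iota]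
    dsimp only
    exact_mod_cast (by linarith [hγ (v - (u + vβ))] :
      (u + vβ) (γ - α + (2 * ℓ : ℤ) • (φ (v - u) : Fin g → ℤ)) ≤
        El φ ℓ v + v γ - El φ ℓ u - u α)

theorem extd_add_extd_le_of_mem_conicHull {vβ : Module.Dual ℤ (Fin g → ℤ)}
    (hα : α ∈ SigmaL φ ℓ) (hβ : α - (2 * ℓ : ℤ) • (φ vβ : Fin g → ℤ) ∈ SigmaL φ ℓ)
    {p : ℝ × (Fin g → ℝ)} (hp : p ∈ conicHull (kGenerators φ ℓ α u)) :
    extd vβ p.2 + extd u p.2 ≤ p.1 := by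
  have := le_of_mem_conicHull (f := (extdLinear (u + vβ)).comp (LinearMap.snd ℝ ℝ _))
    (f' := LinearMap.fst ℝ ℝ _)
    (fun q hq => by simpa using extd_snd_le_fst_of_mem_kGenerators hadd hsymm hα hβ hq) hp
  simpa [extd_add, add_comm] using this

theorem mem_coneC_of_mem_conicHull_of_eq (hα : α ∈ SigmaL φ ℓ) {p : ℝ × (Fin g → ℝ)}
    (hp : p ∈ conicHull (kGenerators φ ℓ α u)) (heq : p.1 = extd u p.2) :
    p.2 ∈ coneC φ ℓ α := by
  have hS (q) (hq : q ∈ kGenerators φ ℓ α u) : extd u q.2 ≤ q.1 := by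
    simpa using extd_snd_le_fst_of_mem_kGenerators hadd hsymm (vβ := 0) hα
      (by simpa [phi_zero hadd] using hα) hq
  have hface := mem_conicHull_of_eq (f := (extdLinear u).comp (LinearMap.snd ℝ ℝ _))
    (f' := LinearMap.fst ℝ ℝ _) (fun q hq => by simpa using hS q hq) hp (by simpa using heq.symm)
  refine map_mem_conicHull (LinearMap.snd ℝ ℝ _) ?_ hface
  rintro _ ⟨q, ⟨hq, hqeq⟩, rfl⟩
  rcases hq with rfl | ⟨γ, hγ, v, rfl⟩
  · simp [extd] at hqeq
  · simp only [LinearMap.coe_comp, Function.comp_apply, LinearMap.snd_apply, extdLinear_apply,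
      extd_iota, LinearMap.fst_apply, Int.cast_inj] at hqeq
    have hkey := El_add_apply_sub_apply (ℓ := ℓ) hadd hsymm u v u α γ
    rw [sub_self, El_zero, LinearMap.zero_apply, add_zero, sub_zero] at hkey
    refine ⟨γ + (2 * ℓ : ℤ) • (φ (v - u) : Fin g → ℤ),
      add_smul_phi_mem_SigmaL hadd hsymm hγ (by linarith), ?_⟩
    simp only [LinearMap.snd_apply]
    congr 1
    abel

theorem mem_conicHull_of_mem_coneC {vβ : Module.Dual ℤ (Fin g → ℤ)} (hα : α ∈ SigmaL φ ℓ)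
    (hβ : α - (2 * ℓ : ℤ) • (φ vβ : Fin g → ℤ) ∈ SigmaL φ ℓ) {x₀ : ℝ} {x : Fin g → ℝ}
    (hx : x ∈ coneC φ ℓ (α - (2 * ℓ : ℤ) • (φ vβ : Fin g → ℤ)))
    (hle : extd vβ x + extd u x ≤ x₀) : (x₀, x) ∈ conicHull (kGenerators φ ℓ α u) := by
  have hL := map_mem_conicHull ((extdLinear (u + vβ)).prod LinearMap.id)
    (T := kGenerators φ ℓ α u) ?_ hx
  · rw [conicHull_eq_hull] at hL ⊢
    have hsplit : (x₀, x) = (x₀ - extd (u + vβ) x) • ((1 : ℝ), (0 : Fin g → ℝ)) +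
        (extdLinear (u + vβ)).prod LinearMap.id x := by
      simp
    rw [hsplit]
    refine add_mem (PointedCone.smul_mem _ ?_ (Submodule.subset_span (Set.mem_insert _ _))) hL
    rw [extd_add]
    linarith
  · rintro _ ⟨_, ⟨γ, hγ, rfl⟩, rfl⟩
    refine Set.mem_insert_of_mem _ ⟨γ, hγ, u + vβ, ?_⟩
    have hkey := El_add_apply_sub_apply_of_mem_SigmaL hadd hsymm hα hβ u (u + vβ) γ
    rw [sub_self, El_zero, LinearMap.zero_apply, add_zero] at hkey
    have hvec : γ - α + (2 * ℓ : ℤ) • (φ (u + vβ - u) : Fin g → ℤ) =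
        γ - (α - (2 * ℓ : ℤ) • (φ vβ : Fin g → ℤ)) := by
      rw [add_sub_cancel_left]; abel
    rw [hvec] at hkey ⊢
    refine Prod.ext ?_ rfl
    show extdLinear (u + vβ) (iota _) = _
    rw [extdLinear_apply, extd_iota, ← sub_eq_zero.mp hkey]

end ConeK

theorem exists_mem_of_mem_closure_of_subset_biUnion {X ι : Type*} [TopologicalSpace X]
    {s : Set X} {I : Set ι} {C : ι → Set X} (hI : I.Finite) (hC : ∀ i ∈ I, IsClosed (C i))
    (hs : s ⊆ ⋃ i ∈ I, C i) {a : X} (ha : a ∈ closure s) :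
    ∃ i ∈ I, a ∈ C i ∧ (s ∩ C i).Nonempty := by
  rw [← Set.inter_eq_left.mpr hs, Set.inter_iUnion₂, hI.closure_biUnion, Set.mem_iUnion₂] at ha
  obtain ⟨i, hi, hai⟩ := ha
  exact ⟨i, hi, closure_minimal Set.inter_subset_right (hC i hi) hai,
    closure_nonempty_iff.mp ⟨a, hai⟩⟩

theorem finite_setOf_iota_mem {g : ℕ} {S : Set (Fin g → ℝ)} (hS : Bornology.IsBounded S) :
    {ξ : Fin g → ℤ | iota ξ ∈ S}.Finite := by
  obtain ⟨R, hR⟩ := isBounded_iff_forall_norm_le.mp hS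
  have hbdd : Bornology.IsBounded {ξ : Fin g → ℤ | iota ξ ∈ S} := by
    refine isBounded_iff_forall_norm_le.mpr ⟨R, fun ξ hξ => ?_⟩
    refine (pi_norm_le_iff_of_nonneg ((norm_nonneg _).trans (hR _ hξ))).mpr fun i => ?_
    rw [← Int.norm_cast_real]
    exact (norm_le_pi_norm (iota ξ) i).trans (hR _ hξ)
  exact hbdd.isCompact_closure.finite_of_discrete.subset subset_closure

theorem Bb_self_nonneg {E : Type*} [AddCommGroup E] [Module ℝ E] {Bb : E →ₗ[ℝ] E →ₗ[ℝ] ℝ}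
    (hBbpos : ∀ x : E, x ≠ 0 → 0 < Bb x x) (x : E) :
    0 ≤ Bb x x := by
  rcases eq_or_ne x 0 with rfl | hx
  · simp
  · exact (hBbpos x hx).le

theorem isBounded_setOf_Bb_sub_le {E : Type*} [NormedAddCommGroup E] [NormedSpace ℝ E]
    [FiniteDimensional ℝ E] {Bb : E →ₗ[ℝ] E →ₗ[ℝ] ℝ} (hBbpos : ∀ x : E, x ≠ 0 → 0 < Bb x x)
    (p : E) (R : ℝ) : Bornology.IsBounded {z | Bb (p - z) (p - z) ≤ R} := by
  have hcont : Continuous fun y => Bb y y :=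
    (LinearMap.toContinuousLinearMap.toLinearMap ∘ₗ Bb).continuous_of_finiteDimensional.clm_apply
      continuous_id
  obtain ⟨c, hc, hcB⟩ := (isCompact_sphere (0 : E) 1).exists_forall_le'
    hcont.continuousOn fun y hy => hBbpos y (ne_zero_of_mem_unit_sphere ⟨y, hy⟩)
  refine (Metric.isBounded_iff_subset_closedBall p).mpr ⟨√(R / c), fun z hz => ?_⟩
  rw [Metric.mem_closedBall, dist_eq_norm, norm_sub_rev]
  set y := p - z
  rcases eq_or_ne y 0 with hy | hy
  · simp [hy]
  have hunit : ‖‖y‖⁻¹ • y‖ = 1 := by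
    rw [norm_smul, norm_inv, norm_norm, inv_mul_cancel₀ (norm_ne_zero_iff.mpr hy)]
  have h := hcB _ (mem_sphere_zero_iff_norm.mpr hunit)
  simp only [map_smul, LinearMap.smul_apply, smul_eq_mul] at h
  have hy' : 0 < ‖y‖ := norm_pos_iff.mpr hy
  refine Real.le_sqrt_of_sq_le ((le_div_iff₀ hc).mpr ?_)
  calc ‖y‖ ^ 2 * c ≤ ‖y‖ ^ 2 * (‖y‖⁻¹ * (‖y‖⁻¹ * Bb y y)) := by gcongr
    _ = Bb y y := by field_simp
    _ ≤ R := hz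

section Voronoi

variable {g : ℕ} {Y : Submodule ℤ (Fin g → ℤ)} {B : Y →ₗ[ℤ] (Fin g → ℤ) →ₗ[ℤ] ℤ} {N : ℕ}
  {φ : Module.Dual ℤ (Fin g → ℤ) → Y} {Bb : (Fin g → ℝ) →ₗ[ℝ] (Fin g → ℝ) →ₗ[ℝ] ℝ} {ℓ : ℕ}

theorem Bb_iota_phi (hφ : ∀ u, B (φ u) = (N : ℤ) • u)
    (hBbcompat : ∀ (y : Y) (x : Fin g → ℤ), Bb (iota (y : Fin g → ℤ)) (iota x) = (B y x : ℝ))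
    (w : Module.Dual ℤ (Fin g → ℤ)) (p : Fin g → ℝ) :
    Bb (iota (φ w : Fin g → ℤ)) p = N * extd w p := by
  suffices Bb (iota (φ w : Fin g → ℤ)) = (N : ℝ) • extdLinear w by simp [this]
  refine LinearMap.pi_ext' fun i => LinearMap.ext_ring ?_
  simp [← iota_single, hBbcompat, hφ, extd_iota]

theorem Bb_sub_smul_iota_phi (hφ : ∀ u, B (φ u) = (N : ℤ) • u)
    (hBbsymm : ∀ x y : Fin g → ℝ, Bb x y = Bb y x)
    (hBbcompat : ∀ (y : Y) (x : Fin g → ℤ), Bb (iota (y : Fin g → ℤ)) (iota x) = (B y x : ℝ))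
    (t : Module.Dual ℤ (Fin g → ℤ)) (x : Fin g → ℝ) :
    Bb (x - iota ((2 * ℓ : ℤ) • (φ t : Fin g → ℤ))) (x - iota ((2 * ℓ : ℤ) • (φ t : Fin g → ℤ)))
      = Bb x x + 4 * ℓ * N * (El φ ℓ t - extd t x) := by
  have h1 := Bb_iota_phi hφ hBbcompat t x
  have h2 := Bb_iota_phi hφ hBbcompat t (iota (φ t : Fin g → ℤ))
  rw [extd_iota] at h2
  simp only [iota_zsmul, map_sub, map_smul, LinearMap.sub_apply, LinearMap.smul_apply,
    smul_eq_mul, hBbsymm x, h1, h2, El]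
  push_cast
  ring

theorem smul_phi_injective (hNpos : 0 < N) (hφ : ∀ u, B (φ u) = (N : ℤ) • u) (hℓ : 0 < ℓ) :
    Function.Injective fun w => (2 * ℓ : ℤ) • (φ w : Fin g → ℤ) := fun _ _ h =>
  phi_injective hNpos hφ <| Subtype.coe_injective <|
    smul_right_injective _ (by positivity : (2 * ℓ : ℤ) ≠ 0) h

/-- The cell of a nearest point of the lattice `2ℓφ(X^∨)`; one exists because the lattice meets
each `B̄`-ball in finitely many points. -/
theorem exists_sub_mem_VorP_zero (hadd : ∀ u v, φ (u + v) = φ u + φ v)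
    (hφ : ∀ u, B (φ u) = (N : ℤ) • u) (hBbpos : ∀ x : Fin g → ℝ, x ≠ 0 → 0 < Bb x x)
    (hNpos : 0 < N) (hℓ : 0 < ℓ) (p : Fin g → ℝ) :
    ∃ w, p - iota ((2 * ℓ : ℤ) • (φ w : Fin g → ℤ)) ∈ VorP Bb φ ℓ 0 := by
  set c : Module.Dual ℤ (Fin g → ℤ) → Fin g → ℤ := fun w => (2 * ℓ : ℤ) • (φ w : Fin g → ℤ)
  set D : Module.Dual ℤ (Fin g → ℤ) → ℝ := fun w => Bb (p - iota (c w)) (p - iota (c w))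
  have hfin : {w | D w ≤ D 0}.Finite :=
    ((finite_setOf_iota_mem (isBounded_setOf_Bb_sub_le hBbpos p (D 0))).preimage
      (smul_phi_injective hNpos hφ hℓ).injOn).subset fun w hw => hw
  obtain ⟨w₀, -, hmin⟩ := Set.exists_min_image _ D hfin ⟨0, le_refl (D 0)⟩
  have hmin' (w) : D w₀ ≤ D w := by
    by_cases hw : D w ≤ D 0
    · exact hmin w hw
    · exact (hmin 0 (le_refl (D 0))).trans (not_le.mp hw).le
  refine ⟨w₀, fun u => ?_⟩
  have hc : p - iota (c w₀) - iota (c u) = p - iota (c (w₀ + u)) := by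
    simp only [c, hadd, Submodule.coe_add, smul_add, iota_add]
    abel
  simp only [phi_zero hadd, ZeroMemClass.coe_zero, smul_zero, iota_zero, sub_zero]
  exact Real.sqrt_le_sqrt (hc ▸ hmin' (w₀ + u))

variable (hadd : ∀ u v, φ (u + v) = φ u + φ v) (hφ : ∀ u, B (φ u) = (N : ℤ) • u)
  (hBbsymm : ∀ x y : Fin g → ℝ, Bb x y = Bb y x) (hBbpos : ∀ x : Fin g → ℝ, x ≠ 0 → 0 < Bb x x)
  (hBbcompat : ∀ (y : Y) (x : Fin g → ℤ), Bb (iota (y : Fin g → ℤ)) (iota x) = (B y x : ℝ))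

include hadd hφ hBbsymm hBbpos hBbcompat

theorem mem_VorP_zero_iff (hNpos : 0 < N) (hℓ : 0 < ℓ) (x : Fin g → ℝ) :
    x ∈ VorP Bb φ ℓ 0 ↔ ∀ t, extd t x ≤ El φ ℓ t := by
  have hpos : (0 : ℝ) < 4 * ℓ * N := by positivity
  refine forall_congr' fun t => ?_
  rw [phi_zero hadd, ZeroMemClass.coe_zero, smul_zero, iota_zero, sub_zero,
    Bb_sub_smul_iota_phi hφ hBbsymm hBbcompat,
    Real.sqrt_le_sqrt_iff ((Bb_sub_smul_iota_phi hφ hBbsymm hBbcompat t x).symm ▸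
      Bb_self_nonneg hBbpos _)]
  constructor
  · intro h; nlinarith
  · intro h; nlinarith

theorem isClosed_VorP_zero (hNpos : 0 < N) (hℓ : 0 < ℓ) : IsClosed (VorP Bb φ ℓ 0) := by
  have h : VorP Bb φ ℓ 0 = ⋂ t, {x | extdLinear t x ≤ El φ ℓ t} := by
    ext x
    simp [mem_VorP_zero_iff hadd hφ hBbsymm hBbpos hBbcompat hNpos hℓ]
  rw [h]
  exact isClosed_iInter fun t =>
    isClosed_le (extdLinear t).continuous_of_finiteDimensional continuous_const

theorem mem_SigmaL_of_iota_mem_VorP (hNpos : 0 < N) (hℓ : 0 < ℓ) {ξ : Fin g → ℤ}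
    (hξ : iota ξ ∈ VorP Bb φ ℓ 0) : ξ ∈ SigmaL φ ℓ := fun t => by
  have h := (mem_VorP_zero_iff hadd hφ hBbsymm hBbpos hBbcompat hNpos hℓ _).mp hξ (-t)
  rw [extd_iota, El_neg hadd] at h
  have h' : -t ξ ≤ El φ ℓ t := by exact_mod_cast h
  linarith

theorem sub_iota_mem_coneC_of_mem_VorP (hNpos : 0 < N) (hℓ : 0 < ℓ)
    (hint : IsIntegral (VorP Bb φ ℓ 0)) (β : Fin g → ℤ) {z : Fin g → ℝ}
    (hz : z ∈ VorP Bb φ ℓ 0) : z - iota β ∈ coneC φ ℓ β := by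
  rw [hint.2.1] at hz
  rw [coneC, conicHull_eq_hull, sub_eq_add_neg]
  refine convexHull_min ?_ ((PointedCone.convex _).translate_preimage_left (-iota β)) hz
  rintro _ ⟨hγ, γ, rfl⟩
  exact Submodule.subset_span ⟨γ,
    mem_SigmaL_of_iota_mem_VorP hadd hφ hBbsymm hBbpos hBbcompat hNpos hℓ hγ,
    by rw [iota_sub, sub_eq_add_neg]⟩

/-- Near `a`, the ray `a + t • x` (`t > 0`) meets only finitely many of the closed Voronoi cells
covering `X_ℝ`, so one of them contains both `a` and a point of the ray. -/
theorem exists_sub_mem_VorP_zero_of_ray (hNpos : 0 < N) (hℓ : 0 < ℓ)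
    (hV : Bornology.IsBounded (VorP Bb φ ℓ 0)) (a x : Fin g → ℝ) :
    ∃ w, ∃ t : ℝ, 0 < t ∧ a - iota ((2 * ℓ : ℤ) • (φ w : Fin g → ℤ)) ∈ VorP Bb φ ℓ 0 ∧
      a + t • x - iota ((2 * ℓ : ℤ) • (φ w : Fin g → ℤ)) ∈ VorP Bb φ ℓ 0 := by
  set V := VorP Bb φ ℓ 0
  set c : Module.Dual ℤ (Fin g → ℤ) → Fin g → ℝ :=
    fun w => iota ((2 * ℓ : ℤ) • (φ w : Fin g → ℤ))
  set f : ℝ → Fin g → ℝ := fun t => a + t • x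
  have hf : Continuous f := by fun_prop
  set P := f '' Set.Ioc 0 1
  have hPV : Bornology.IsBounded (P - V) :=
    ((isCompact_Icc.image hf).isBounded.subset (Set.image_mono Set.Ioc_subset_Icc_self)).sub hV
  have hI : {w | (P ∩ {q | q - c w ∈ V}).Nonempty}.Finite :=
    ((finite_setOf_iota_mem hPV).preimage (smul_phi_injective hNpos hφ hℓ).injOn).subset
      fun w ⟨q, hqP, hqV⟩ => ⟨q, hqP, q - c w, hqV, sub_sub_cancel q (c w)⟩
  have hcover : P ⊆ ⋃ w ∈ {w | (P ∩ {q | q - c w ∈ V}).Nonempty}, {q | q - c w ∈ V} := by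
    intro q hq
    obtain ⟨w, hw⟩ := exists_sub_mem_VorP_zero hadd hφ hBbpos hNpos hℓ q
    exact Set.mem_biUnion ⟨q, hq, hw⟩ hw
  have ha : a ∈ closure P := image_closure_subset_closure_image hf
    ⟨0, by rw [closure_Ioc zero_ne_one]; exact ⟨le_rfl, zero_le_one⟩, by simp [f]⟩
  obtain ⟨w, -, haw, _, ⟨t, ⟨ht, -⟩, rfl⟩, htw⟩ :=
    exists_mem_of_mem_closure_of_subset_biUnion hI
      (fun w _ => (isClosed_VorP_zero hadd hφ hBbsymm hBbpos hBbcompat hNpos hℓ).preimage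
        (continuous_sub_right (c w))) hcover ha
  exact ⟨w, t, ht, haw, htw⟩

theorem exists_mem_SigmaL_mem_coneC (hNpos : 0 < N) (hℓ : 0 < ℓ)
    (hint : IsIntegral (VorP Bb φ ℓ 0)) (α : Fin g → ℤ) (x : Fin g → ℝ) :
    ∃ w, α - (2 * ℓ : ℤ) • (φ w : Fin g → ℤ) ∈ SigmaL φ ℓ ∧
      x ∈ coneC φ ℓ (α - (2 * ℓ : ℤ) • (φ w : Fin g → ℤ)) := by
  obtain ⟨w, t, ht, hαw, htw⟩ := exists_sub_mem_VorP_zero_of_ray hadd hφ hBbsymm hBbpos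
    hBbcompat hNpos hℓ hint.1 (iota α) x
  set β := α - (2 * ℓ : ℤ) • (φ w : Fin g → ℤ)
  have hβ : iota β = iota α - iota ((2 * ℓ : ℤ) • (φ w : Fin g → ℤ)) := iota_sub _ _
  refine ⟨w, mem_SigmaL_of_iota_mem_VorP hadd hφ hBbsymm hBbpos hBbcompat hNpos hℓ
    (hβ ▸ hαw), ?_⟩
  have hcone := sub_iota_mem_coneC_of_mem_VorP hadd hφ hBbsymm hBbpos hBbcompat hNpos hℓ hint β htw
  rw [hβ, sub_sub_sub_cancel_right, add_sub_cancel_left] at hcone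
  rw [coneC, conicHull_eq_hull, SetLike.mem_coe] at hcone ⊢
  simpa only [smul_smul, inv_mul_cancel₀ ht.ne', one_smul] using
    PointedCone.smul_mem _ (inv_nonneg.mpr ht.le) hcone

end Voronoi

theorem statement15_general
    (g : ℕ)
    (Y : Submodule ℤ (Fin g → ℤ))
    (B : Y →ₗ[ℤ] (Fin g → ℤ) →ₗ[ℤ] ℤ)
    (hBsymm : ∀ y z : Y, B y (z : Fin g → ℤ) = B z (y : Fin g → ℤ))
    (hBpos : ∀ y : Y, y ≠ 0 → 0 < B y (y : Fin g → ℤ))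
    (N : ℕ) (hNpos : 0 < N)
    (φ : ((Fin g → ℤ) →ₗ[ℤ] ℤ) → Y)
    (hφ : ∀ u : (Fin g → ℤ) →ₗ[ℤ] ℤ, B (φ u) = (N : ℤ) • u)
    (Bb : (Fin g → ℝ) →ₗ[ℝ] (Fin g → ℝ) →ₗ[ℝ] ℝ)
    (hBbsymm : ∀ x y : Fin g → ℝ, Bb x y = Bb y x)
    (hBbpos : ∀ x : Fin g → ℝ, x ≠ 0 → 0 < Bb x x)
    (hBbcompat : ∀ (y : Y) (x : Fin g → ℤ), Bb (iota (y : Fin g → ℤ)) (iota x) = (B y x : ℝ))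
    (ℓ : ℕ) (hℓ : 0 < ℓ)
    (hint : IsIntegral (VorP Bb φ ℓ 0))
    (α : Fin g → ℤ) (hα : α ∈ SigmaL φ ℓ)
    (u : (Fin g → ℤ) →ₗ[ℤ] ℤ)
    (K : Set (ℝ × (Fin g → ℝ)))
    (hK : K = conicHull (insert ((1 : ℝ), (0 : Fin g → ℝ))
      {p : ℝ × (Fin g → ℝ) | ∃ γ ∈ SigmaL φ ℓ, ∃ v : (Fin g → ℤ) →ₗ[ℤ] ℤ,
        p = (((El φ ℓ v + v γ - El φ ℓ u - u α : ℤ) : ℝ),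
             iota (γ - α + (2 * (ℓ : ℤ)) • ((φ (v - u) : Fin g → ℤ))))})) :
    (∀ (x₀ : ℝ) (x : Fin g → ℝ),
      (x₀, x) ∈ K ↔ ∃ β ∈ SigmaAlpha φ ℓ α, ∃ vβ : (Fin g → ℤ) →ₗ[ℤ] ℤ,
        β = α - (2 * (ℓ : ℤ)) • ((φ vβ : Fin g → ℤ)) ∧
        x ∈ coneC φ ℓ β ∧ extd vβ x + extd u x ≤ x₀) ∧
    (∀ (x₀ : ℝ) (x : Fin g → ℝ), (x₀, x) ∈ K →
      extd u x ≤ x₀ ∧ (x₀ = extd u x ↔ x ∈ coneC φ ℓ α ∧ x₀ = extd u x)) := by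
  have hadd := phi_add hBpos hφ
  have hsymm := apply_phi_comm hBsymm hNpos hφ
  change K = conicHull (kGenerators φ ℓ α u) at hK
  subst hK
  refine ⟨fun x₀ x => ⟨fun hx => ?_, ?_⟩, fun x₀ x hx => ⟨?_, ?_⟩⟩
  · obtain ⟨vβ, hβ, hxβ⟩ :=
      exists_mem_SigmaL_mem_coneC hadd hφ hBbsymm hBbpos hBbcompat hNpos hℓ hint α x
    refine ⟨_, ⟨hβ, -vβ, ?_⟩, vβ, rfl, hxβ,
      extd_add_extd_le_of_mem_conicHull hadd hsymm hα hβ hx⟩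
    rw [phi_neg hadd, NegMemClass.coe_neg, smul_neg, sub_eq_add_neg]
  · rintro ⟨β, ⟨hβ, -⟩, vβ, rfl, hxβ, hle⟩
    exact mem_conicHull_of_mem_coneC hadd hsymm hα hβ hxβ hle
  · simpa [extd] using extd_add_extd_le_of_mem_conicHull hadd hsymm (vβ := 0) hα
      (by simpa [phi_zero hadd] using hα) hx
  · exact ⟨fun h => ⟨mem_coneC_of_mem_conicHull_of_eq hadd hsymm hα hx h, h⟩, And.right⟩

/-- description of the cone `K ⊆ ℝ × X_ℝ` generated by `(1,0)` and the
elements `(E_ℓ(v) + v(γ) − E_ℓ(u) − u(α), γ − α + 2ℓφ(v − u))`, `γ ∈ Σ_ℓ`, `v ∈ X^∨`. -/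
theorem statement15
    (g : ℕ) (hg : 1 ≤ g)
    (Y : Submodule ℤ (Fin g → ℤ))
    (hYfin : Y.toAddSubgroup.index ≠ 0)
    (B : Y →ₗ[ℤ] (Fin g → ℤ) →ₗ[ℤ] ℤ)
    (hBsymm : ∀ y z : Y, B y (z : Fin g → ℤ) = B z (y : Fin g → ℤ))
    (hBpos : ∀ y : Y, y ≠ 0 → 0 < B y (y : Fin g → ℤ))
    (N : ℕ) (hN : N = (LinearMap.range B).toAddSubgroup.index) (hNpos : 0 < N)
    (φ : ((Fin g → ℤ) →ₗ[ℤ] ℤ) → Y)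
    (hφ : ∀ u : (Fin g → ℤ) →ₗ[ℤ] ℤ, B (φ u) = (N : ℤ) • u)
    (Bb : (Fin g → ℝ) →ₗ[ℝ] (Fin g → ℝ) →ₗ[ℝ] ℝ)
    (hBbsymm : ∀ x y : Fin g → ℝ, Bb x y = Bb y x)
    (hBbpos : ∀ x : Fin g → ℝ, x ≠ 0 → 0 < Bb x x)
    (hBbcompat : ∀ (y : Y) (x : Fin g → ℤ), Bb (iota (y : Fin g → ℤ)) (iota x) = (B y x : ℝ))
    (ℓ : ℕ) (hℓ : 0 < ℓ)
    (hint : IsIntegral (VorP Bb φ ℓ 0))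
    (α : Fin g → ℤ) (hα : α ∈ SigmaL φ ℓ)
    (u : (Fin g → ℤ) →ₗ[ℤ] ℤ)
    (K : Set (ℝ × (Fin g → ℝ)))
    (hK : K = conicHull (insert ((1 : ℝ), (0 : Fin g → ℝ))
      {p : ℝ × (Fin g → ℝ) | ∃ γ ∈ SigmaL φ ℓ, ∃ v : (Fin g → ℤ) →ₗ[ℤ] ℤ,
        p = (((El φ ℓ v + v γ - El φ ℓ u - u α : ℤ) : ℝ),
             iota (γ - α + (2 * (ℓ : ℤ)) • ((φ (v - u) : Fin g → ℤ))))})) :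
    (∀ (x₀ : ℝ) (x : Fin g → ℝ),
      (x₀, x) ∈ K ↔ ∃ β ∈ SigmaAlpha φ ℓ α, ∃ vβ : (Fin g → ℤ) →ₗ[ℤ] ℤ,
        β = α - (2 * (ℓ : ℤ)) • ((φ vβ : Fin g → ℤ)) ∧
        x ∈ coneC φ ℓ β ∧ extd vβ x + extd u x ≤ x₀) ∧
    (∀ (x₀ : ℝ) (x : Fin g → ℝ), (x₀, x) ∈ K →
      extd u x ≤ x₀ ∧ (x₀ = extd u x ↔ x ∈ coneC φ ℓ α ∧ x₀ = extd u x)) :=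
  statement15_general g Y B hBsymm hBpos N hNpos φ hφ Bb hBbsymm hBbpos hBbcompat ℓ hℓ hint α hα u K
    hK

end NFC
end

section
/- For every ℝ-linear functional z : X_ℝ → ℝ, the function X → ℝ, x ↦ D_ℓ(x) + z(x), attains its minimum: there exists a ∈ X such that D_ℓ(a) + z(a) ≤ D_ℓ(x) + z(x) for all x ∈ X. -/
open scoped BigOperators Pointwise

namespace NFC

/-! `D_ℓ` is a Legendre transform: if `x = γ + 2ℓφ(w)` with `γ ∈ Σ_ℓ`, then
`D_ℓ(x) = max_u (u(x) - E_ℓ(u))`, attained at `u = w`; the inequality `D_ℓ(x) ≥ u(x) - E_ℓ(u)`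
is the condition `γ ∈ Σ_ℓ` tested on `w - u`. Taking `u = ±k·xᵢ^∨` gives
`D_ℓ(x) ≥ k‖x‖_∞ - O(k²)`, which beats any real linear functional once `k` is large, so `D_ℓ + z`
tends to `+∞` along the cofinite filter of `X` and attains its minimum.
A decomposition of `x` comes from a minimiser `w₀` of the integer-valued, bounded below function
`w ↦ E_ℓ(w) + w(x)`: then `x = (x + 2ℓφ(w₀)) + 2ℓφ(-w₀)`. -/

section

variable {g : ℕ} {Y : Submodule ℤ (Fin g → ℤ)}

structure IsPositiveSymmetric (φ : ((Fin g → ℤ) →ₗ[ℤ] ℤ) → Y) : Prop where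
  map_add : ∀ u v, φ (u + v) = φ u + φ v
  apply_comm : ∀ u v : (Fin g → ℤ) →ₗ[ℤ] ℤ, u (φ v : Fin g → ℤ) = v (φ u : Fin g → ℤ)
  apply_self_nonneg : ∀ u : (Fin g → ℤ) →ₗ[ℤ] ℤ, 0 ≤ u (φ u : Fin g → ℤ)

namespace IsPositiveSymmetric

variable {φ : ((Fin g → ℤ) →ₗ[ℤ] ℤ) → Y} (hφ : IsPositiveSymmetric φ) {ℓ : ℕ}
include hφ

theorem map_zsmul (m : ℤ) (u : (Fin g → ℤ) →ₗ[ℤ] ℤ) : φ (m • u) = m • φ u :=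
  _root_.map_zsmul (AddMonoidHom.mk' φ hφ.map_add) m u

theorem map_neg (u : (Fin g → ℤ) →ₗ[ℤ] ℤ) : φ (-u) = -φ u :=
  (AddMonoidHom.mk' φ hφ.map_add).map_neg u

theorem El_add (u v : (Fin g → ℤ) →ₗ[ℤ] ℤ) :
    El φ ℓ (u + v) = El φ ℓ u + 2 * ℓ * u (φ v : Fin g → ℤ) + El φ ℓ v := by
  simp only [El, hφ.map_add, Submodule.coe_add, LinearMap.add_apply]
  rw [_root_.map_add u, _root_.map_add v, hφ.apply_comm v u]
  ring

theorem El_zsmul (m : ℤ) (u : (Fin g → ℤ) →ₗ[ℤ] ℤ) : El φ ℓ (m • u) = m ^ 2 * El φ ℓ u := by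
  simp only [El, hφ.map_zsmul, Submodule.coe_smul, LinearMap.smul_apply]
  rw [_root_.map_zsmul u, smul_eq_mul, smul_eq_mul]
  ring

theorem El_neg (u : (Fin g → ℤ) →ₗ[ℤ] ℤ) : El φ ℓ (-u) = El φ ℓ u := by
  simpa using hφ.El_zsmul (ℓ := ℓ) (-1) u

theorem El_nonneg (u : (Fin g → ℤ) →ₗ[ℤ] ℤ) : 0 ≤ El φ ℓ u :=
  mul_nonneg (Int.natCast_nonneg ℓ) (hφ.apply_self_nonneg u)

/-- Expanding `E_ℓ(2ℓA·w + v) ≥ 0`, where `φ(v) = A·x`, gives `4ℓ²A²(E_ℓ(w) + w(x)) + E_ℓ(v) ≥ 0`. -/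
theorem neg_El_le_El_add_apply (hℓ : 0 < ℓ) {x : Fin g → ℤ} {A : ℤ} (hA : A ≠ 0)
    {v : (Fin g → ℤ) →ₗ[ℤ] ℤ} (hv : (φ v : Fin g → ℤ) = A • x) (w : (Fin g → ℤ) →ₗ[ℤ] ℤ) :
    -El φ ℓ v ≤ El φ ℓ w + w x := by
  have hexp := hφ.El_nonneg (ℓ := ℓ) ((2 * ℓ * A) • w + v)
  rw [hφ.El_add, hφ.El_zsmul, LinearMap.smul_apply, hv, _root_.map_zsmul, smul_eq_mul,
    smul_eq_mul] at hexp
  have hscale : 1 ≤ 4 * (ℓ : ℤ) ^ 2 * A ^ 2 := by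
    have : 1 ≤ (ℓ : ℤ) := by exact_mod_cast hℓ
    nlinarith [sq_pos_of_ne_zero hA]
  have hscaled : -El φ ℓ v ≤ 4 * ℓ ^ 2 * A ^ 2 * (El φ ℓ w + w x) := by linarith
  by_contra! hlt
  nlinarith [hφ.El_nonneg (ℓ := ℓ) v]

theorem exists_mem_SigmaL_add (hℓ : 0 < ℓ) {x : Fin g → ℤ}
    (hx : ∃ A : ℤ, A ≠ 0 ∧ ∃ v, (φ v : Fin g → ℤ) = A • x) :
    ∃ γ ∈ SigmaL φ ℓ, ∃ w, x = γ + (2 * (ℓ : ℤ)) • (φ w : Fin g → ℤ) := by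
  obtain ⟨A, hA, v, hv⟩ := hx
  obtain ⟨_, ⟨w₀, rfl⟩, hmin⟩ := Int.exists_least_of_bdd
    (P := fun n => ∃ w, El φ ℓ w + w x = n)
    ⟨-El φ ℓ v, fun _ ⟨w, hw⟩ => hw ▸ hφ.neg_El_le_El_add_apply hℓ hA hv w⟩ ⟨_, 0, rfl⟩
  refine ⟨x + (2 * (ℓ : ℤ)) • (φ w₀ : Fin g → ℤ), fun u => ?_, -w₀, ?_⟩
  · have hu := hmin _ ⟨w₀ + u, rfl⟩
    rw [hφ.El_add, LinearMap.add_apply, hφ.apply_comm] at hu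
    rw [_root_.map_add, _root_.map_zsmul, smul_eq_mul]
    linarith
  · rw [hφ.map_neg, NegMemClass.coe_neg, smul_neg, add_neg_cancel_right]

theorem apply_sub_El_le {γ : Fin g → ℤ} (hγ : γ ∈ SigmaL φ ℓ) (w u : (Fin g → ℤ) →ₗ[ℤ] ℤ) :
    u (γ + (2 * (ℓ : ℤ)) • (φ w : Fin g → ℤ)) - El φ ℓ u ≤ El φ ℓ w + w γ := by
  have h := hγ (w + -u)
  rw [hφ.El_add, hφ.El_neg, hφ.map_neg, NegMemClass.coe_neg, _root_.map_neg, LinearMap.add_apply,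
    LinearMap.neg_apply] at h
  rw [_root_.map_add, _root_.map_zsmul, smul_eq_mul, hφ.apply_comm u w]
  linarith

theorem mul_abs_apply_sub_le {D : (Fin g → ℤ) → ℤ}
    (hD : ∀ x u, u x - El φ ℓ u ≤ D x) (k : ℕ) (x : Fin g → ℤ) (i : Fin g) :
    k * |x i| - k ^ 2 * El φ ℓ (LinearMap.proj i) ≤ D x := by
  have key : ∀ m : ℤ, m ^ 2 = k ^ 2 → m * x i - k ^ 2 * El φ ℓ (LinearMap.proj i) ≤ D x := by
    intro m hm
    have h := hD x (m • LinearMap.proj i)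
    rwa [hφ.El_zsmul, hm, LinearMap.smul_apply, LinearMap.proj_apply, smul_eq_mul] at h
  rcases abs_choice (x i) with h | h <;> rw [h]
  · exact key k rfl
  · simpa using key (-k) (by ring)

theorem mul_norm_sub_le {D : (Fin g → ℤ) → ℤ}
    (hD : ∀ x u, u x - El φ ℓ u ≤ D x) {k : ℕ} (hk : 0 < k) (x : Fin g → ℤ) :
    k * ‖x‖ - k ^ 2 * ∑ i, (El φ ℓ (LinearMap.proj i) : ℝ) ≤ D x := by
  set P := ∑ i, (El φ ℓ (LinearMap.proj i) : ℝ)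
  have hkR : (0 : ℝ) < k := by exact_mod_cast hk
  have hEl : ∀ i, (0 : ℝ) ≤ El φ ℓ (LinearMap.proj i) := fun i => by
    exact_mod_cast hφ.El_nonneg _
  have hD0 : (0 : ℝ) ≤ D x := by exact_mod_cast (by simpa [El] using hD x 0)
  have hP0 : 0 ≤ P := Finset.sum_nonneg fun i _ => hEl i
  rw [sub_le_iff_le_add, ← le_div_iff₀' hkR, pi_norm_le_iff_of_nonneg (by positivity)]
  intro i
  rw [Int.norm_eq_abs, le_div_iff₀' hkR]
  have hi : ((k : ℤ) * |x i| - k ^ 2 * El φ ℓ (LinearMap.proj i) : ℝ) ≤ D x := by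
    exact_mod_cast hφ.mul_abs_apply_sub_le hD k x i
  have hPi : (El φ ℓ (LinearMap.proj i) : ℝ) ≤ P :=
    Finset.single_le_sum (fun j _ => hEl j) (Finset.mem_univ i)
  push_cast at hi
  nlinarith

end IsPositiveSymmetric

theorem norm_iota (x : Fin g → ℤ) : ‖iota x‖ = ‖x‖ := by
  simp only [iota, Pi.norm_def]
  congr 2

open Filter in
theorem tendsto_add_apply_iota_cofinite {φ : ((Fin g → ℤ) →ₗ[ℤ] ℤ) → Y}
    (hφ : IsPositiveSymmetric φ) {ℓ : ℕ} {D : (Fin g → ℤ) → ℤ}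
    (hD : ∀ x u, u x - El φ ℓ u ≤ D x) (z : (Fin g → ℝ) →ₗ[ℝ] ℝ) :
    Tendsto (fun x => (D x : ℝ) + z (iota x)) cofinite atTop := by
  set Z := ‖LinearMap.toContinuousLinearMap z‖
  have hz : ∀ x, -(Z * ‖x‖) ≤ z (iota x) := fun x => by
    have h := (LinearMap.toContinuousLinearMap z).le_opNorm (iota x)
    rw [LinearMap.coe_toContinuousLinearMap', Real.norm_eq_abs, norm_iota] at h
    linarith [neg_abs_le (z (iota x))]
  obtain ⟨k, hk⟩ := exists_nat_ge (Z + 1)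
  have hkpos : 0 < k := by
    have : (0 : ℝ) < k := by linarith [norm_nonneg (LinearMap.toContinuousLinearMap z)]
    exact_mod_cast this
  set P := ∑ i, (El φ ℓ (LinearMap.proj i) : ℝ)
  have hnorm : Tendsto (fun x : Fin g → ℤ => ‖x‖) cofinite atTop := by
    rw [← cocompact_eq_cofinite]
    exact tendsto_norm_cocompact_atTop
  refine tendsto_atTop_mono (fun x => ?_)
    (tendsto_atTop_add_const_right _ (-(k ^ 2 * P)) hnorm)
  have := hφ.mul_norm_sub_le hD hkpos x
  nlinarith [hz x, norm_nonneg x]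

section Bilinear

variable (B : Y →ₗ[ℤ] (Fin g → ℤ) →ₗ[ℤ] ℤ)

theorem injective_of_pos (hBpos : ∀ y : Y, y ≠ 0 → 0 < B y (y : Fin g → ℤ)) :
    Function.Injective B :=
  (injective_iff_map_eq_zero B).mpr fun y hy => by
    by_contra hne
    simpa [hy] using hBpos y hne

theorem isPositiveSymmetric_of_pos (hBsymm : ∀ y z : Y, B y (z : Fin g → ℤ) = B z (y : Fin g → ℤ))
    (hBpos : ∀ y : Y, y ≠ 0 → 0 < B y (y : Fin g → ℤ)) {N : ℕ} (hNpos : 0 < N)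
    {φ : ((Fin g → ℤ) →ₗ[ℤ] ℤ) → Y} (hφ : ∀ u, B (φ u) = (N : ℤ) • u) :
    IsPositiveSymmetric φ where
  map_add u v := injective_of_pos B hBpos (by rw [hφ, map_add, hφ, hφ, smul_add])
  apply_comm u v := by
    have h := hBsymm (φ u) (φ v)
    rw [hφ, hφ, LinearMap.smul_apply, LinearMap.smul_apply, smul_eq_mul, smul_eq_mul] at h
    exact mul_left_cancel₀ (by exact_mod_cast hNpos.ne') h
  apply_self_nonneg u := by
    have h : 0 ≤ B (φ u) (φ u : Fin g → ℤ) := by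
      rcases eq_or_ne (φ u) 0 with h0 | h0
      · simp [h0]
      · exact (hBpos _ h0).le
    rw [hφ, LinearMap.smul_apply, smul_eq_mul] at h
    exact nonneg_of_mul_nonneg_right h (by exact_mod_cast hNpos)

/-- Witness: `v = B([X : Y]·x)`, since `φ(B(y)) = N·y` for `y ∈ Y`. -/
theorem exists_phi_eq_smul (hYfin : Y.toAddSubgroup.index ≠ 0)
    (hBpos : ∀ y : Y, y ≠ 0 → 0 < B y (y : Fin g → ℤ)) {N : ℕ} (hNpos : 0 < N)
    {φ : ((Fin g → ℤ) →ₗ[ℤ] ℤ) → Y} (hφ : ∀ u, B (φ u) = (N : ℤ) • u) (x : Fin g → ℤ) :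
    ∃ A : ℤ, A ≠ 0 ∧ ∃ v, (φ v : Fin g → ℤ) = A • x := by
  set M := Y.toAddSubgroup.index
  let y : Y := ⟨M • x, AddSubgroup.nsmul_index_mem Y.toAddSubgroup x⟩
  have hy : φ (B y) = (N : ℤ) • y := injective_of_pos B hBpos (by rw [hφ, map_zsmul])
  refine ⟨N * M, by positivity, B y, ?_⟩
  rw [hy, Submodule.coe_smul, mul_smul, natCast_zsmul]
  rfl

end Bilinear

end

theorem statement17_general
    (g : ℕ)
    (Y : Submodule ℤ (Fin g → ℤ))
    (hYfin : Y.toAddSubgroup.index ≠ 0)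
    (B : Y →ₗ[ℤ] (Fin g → ℤ) →ₗ[ℤ] ℤ)
    (hBsymm : ∀ y z : Y, B y (z : Fin g → ℤ) = B z (y : Fin g → ℤ))
    (hBpos : ∀ y : Y, y ≠ 0 → 0 < B y (y : Fin g → ℤ))
    (N : ℕ) (hNpos : 0 < N)
    (φ : ((Fin g → ℤ) →ₗ[ℤ] ℤ) → Y)
    (hφ : ∀ u : (Fin g → ℤ) →ₗ[ℤ] ℤ, B (φ u) = (N : ℤ) • u)
    (ℓ : ℕ) (hℓ : 0 < ℓ)
    (D : (Fin g → ℤ) → ℤ)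
    (hD : ∀ γ ∈ SigmaL φ ℓ, ∀ z : (Fin g → ℤ) →ₗ[ℤ] ℤ,
      D (γ + (2 * (ℓ : ℤ)) • ((φ z : Fin g → ℤ))) = El φ ℓ z + z γ) :
    ∀ z : (Fin g → ℝ) →ₗ[ℝ] ℝ, ∃ a : Fin g → ℤ, ∀ x : Fin g → ℤ,
      (D a : ℝ) + z (iota a) ≤ (D x : ℝ) + z (iota x) := by
  intro z
  have hφpos := isPositiveSymmetric_of_pos B hBsymm hBpos hNpos hφ
  have hDge : ∀ x u, u x - El φ ℓ u ≤ D x := fun x u => by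
    obtain ⟨γ, hγ, w, rfl⟩ :=
      hφpos.exists_mem_SigmaL_add hℓ (exists_phi_eq_smul B hYfin hBpos hNpos hφ x)
    rw [hD γ hγ w]
    exact hφpos.apply_sub_El_le hγ w u
  exact (tendsto_add_apply_iota_cofinite hφpos hDge z).exists_forall_le

/-- for every ℝ-linear functional `z` on `X_ℝ`, the function
`x ↦ D_ℓ(x) + z(x)` on `X` attains its minimum. -/
theorem statement17
    (g : ℕ) (hg : 1 ≤ g)
    (Y : Submodule ℤ (Fin g → ℤ))
    (hYfin : Y.toAddSubgroup.index ≠ 0)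
    (B : Y →ₗ[ℤ] (Fin g → ℤ) →ₗ[ℤ] ℤ)
    (hBsymm : ∀ y z : Y, B y (z : Fin g → ℤ) = B z (y : Fin g → ℤ))
    (hBpos : ∀ y : Y, y ≠ 0 → 0 < B y (y : Fin g → ℤ))
    (N : ℕ) (hN : N = (LinearMap.range B).toAddSubgroup.index) (hNpos : 0 < N)
    (φ : ((Fin g → ℤ) →ₗ[ℤ] ℤ) → Y)
    (hφ : ∀ u : (Fin g → ℤ) →ₗ[ℤ] ℤ, B (φ u) = (N : ℤ) • u)
    (ℓ : ℕ) (hℓ : 0 < ℓ)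
    (D : (Fin g → ℤ) → ℤ)
    (hD : ∀ γ ∈ SigmaL φ ℓ, ∀ z : (Fin g → ℤ) →ₗ[ℤ] ℤ,
      D (γ + (2 * (ℓ : ℤ)) • ((φ z : Fin g → ℤ))) = El φ ℓ z + z γ) :
    ∀ z : (Fin g → ℝ) →ₗ[ℝ] ℝ, ∃ a : Fin g → ℤ, ∀ x : Fin g → ℤ,
      (D a : ℝ) + z (iota a) ≤ (D x : ℝ) + z (iota x) :=
  statement17_general g Y hYfin B hBsymm hBpos N hNpos φ hφ ℓ hℓ D hD

end NFC
end
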